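/- Let k₁, k₃ ∈ ℝ and let λ : ℝ → ℝ be twice differentiable with λ'(t) ≠ 0 for all t. Let A, B, C, E : ℝ → ℝ be differentiable with B(t) ≠ 0 and C(t) ≠ 0 for all t, and let Ã, B̃, C̃, Ẽ : ℝ → ℝ be differentiable with Ã(λ(t)) = e^{5k₁} A(t)/λ'(t), B̃(λ(t)) = e^{3k₁} B(t)/λ'(t), C̃(λ(t)) = e^{3k₁-k₃} C(t)/λ'(t), Ẽ(λ(t)) = e^{k₁-k₃} E(t)/λ'(t) for all t. Then for every t, Ã(λ(t))³ (Ã'(λ(t)) Ẽ(λ(t)) − Ã(λ(t)) Ẽ'(λ(t)))² / (B̃(λ(t))⁷ C̃(λ(t))²) = A(t)³ (A'(t) E(t) − A(t) E'(t))² / (B(t)⁷ C(t)²). That is, J₃⁽¹⁾ = A³(A_t E − A E_t)²/(B⁷C²) is a differential invariant of first order of the equivalence group of subclass (3). -/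

import Mathlib

/-!
Write `W(f, g) = f g' - f' g`, so that `A_t E - A E_t = W(E, A)`. Under `t ↦ λ(t)` the Wronskian
picks up one factor `λ'` by the chain rule, and multiplying both functions by the common factor
`1/λ'` multiplies it by `1/λ'²` — the terms containing `λ''` cancel. Hence
`W(Ẽ, Ã) ∘ λ = e^{6k₁-k₃} W(E, A) / λ'³`, and numerator and denominator of `J₃⁽¹⁾` are both
multiplied by `e^{27k₁-2k₃} / λ'⁹`.
-/

open Real

noncomputable def wronskian (f g : ℝ → ℝ) (t : ℝ) : ℝ :=
  f t * deriv g t - deriv f t * g t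

section Wronskian

variable {f g h F G φ : ℝ → ℝ} {t : ℝ}

theorem wronskian_comp (hF : DifferentiableAt ℝ F (φ t)) (hG : DifferentiableAt ℝ G (φ t))
    (hφ : DifferentiableAt ℝ φ t) :
    wronskian (F ∘ φ) (G ∘ φ) t = deriv φ t * wronskian F G (φ t) := by
  simp only [wronskian, deriv_comp t hF hφ, deriv_comp t hG hφ, Function.comp_apply]
  ring

theorem wronskian_mul_right (hf : DifferentiableAt ℝ f t) (hg : DifferentiableAt ℝ g t)
    (hh : DifferentiableAt ℝ h t) :
    wronskian (fun s => f s * h s) (fun s => g s * h s) t = h t ^ 2 * wronskian f g t := by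
  simp only [wronskian, deriv_fun_mul hf hh, deriv_fun_mul hg hh]
  ring

theorem wronskian_const_mul (a b : ℝ) (hf : DifferentiableAt ℝ f t)
    (hg : DifferentiableAt ℝ g t) :
    wronskian (fun s => a * f s) (fun s => b * g s) t = a * b * wronskian f g t := by
  simp only [wronskian, deriv_const_mul a hf, deriv_const_mul b hg]
  ring

end Wronskian

theorem wronskian_eq_of_comp_eq_div_deriv {f g F G φ : ℝ → ℝ} {a b : ℝ}
    (hφ : Differentiable ℝ φ) (hφ' : Differentiable ℝ (deriv φ)) (hφ0 : ∀ t, deriv φ t ≠ 0)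
    (hf : Differentiable ℝ f) (hg : Differentiable ℝ g)
    (hF : Differentiable ℝ F) (hG : Differentiable ℝ G)
    (hFf : ∀ t, F (φ t) = a * f t / deriv φ t) (hGg : ∀ t, G (φ t) = b * g t / deriv φ t)
    (t : ℝ) :
    wronskian F G (φ t) = a * b * wronskian f g t / deriv φ t ^ 3 := by
  have hcomp (H k : ℝ → ℝ) (c : ℝ) (hH : ∀ t, H (φ t) = c * k t / deriv φ t) :
      H ∘ φ = fun s => c * k s * (deriv φ s)⁻¹ :=
    funext fun s => by rw [Function.comp_apply, hH, div_eq_mul_inv]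
  have hinv : DifferentiableAt ℝ (fun s => (deriv φ s)⁻¹) t :=
    (hφ' t).inv (hφ0 t)
  have hW := wronskian_comp (hF (φ t)) (hG (φ t)) (hφ t)
  rw [hcomp F f a hFf, hcomp G g b hGg,
    wronskian_mul_right ((hf t).const_mul a) ((hg t).const_mul b) hinv,
    wronskian_const_mul a b (hf t) (hg t)] at hW
  field_simp [hφ0 t] at hW ⊢
  linear_combination -hW

theorem J3_first_order_invariant_general
    (k₁ k₃ : ℝ)
    (lam : ℝ → ℝ) (hlam : Differentiable ℝ lam)
    (hlam2 : Differentiable ℝ (deriv lam)) (hlam' : ∀ t, deriv lam t ≠ 0)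
    (A B C E : ℝ → ℝ) (hA : Differentiable ℝ A)
    (hE : Differentiable ℝ E)
    (At Bt Ct Et : ℝ → ℝ) (hAt : Differentiable ℝ At)
    (hEt : Differentiable ℝ Et)
    (hAtr : ∀ t, At (lam t) = Real.exp (5 * k₁) * A t / deriv lam t)
    (hBtr : ∀ t, Bt (lam t) = Real.exp (3 * k₁) * B t / deriv lam t)
    (hCtr : ∀ t, Ct (lam t) = Real.exp (3 * k₁ - k₃) * C t / deriv lam t)
    (hEtr : ∀ t, Et (lam t) = Real.exp (k₁ - k₃) * E t / deriv lam t) :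
    ∀ t,
      At (lam t) ^ 3 * (deriv At (lam t) * Et (lam t) - At (lam t) * deriv Et (lam t)) ^ 2
          / (Bt (lam t) ^ 7 * Ct (lam t) ^ 2)
        = A t ^ 3 * (deriv A t * E t - A t * deriv E t) ^ 2 / (B t ^ 7 * C t ^ 2) := by
  intro t
  have hW : deriv At (lam t) * Et (lam t) - At (lam t) * deriv Et (lam t)
      = exp (k₁ - k₃) * exp (5 * k₁) * (deriv A t * E t - A t * deriv E t)
        / deriv lam t ^ 3 := by
    have := wronskian_eq_of_comp_eq_div_deriv hlam hlam2 hlam' hE hA hEt hAt hEtr hAtr t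
    simp only [wronskian] at this
    linear_combination this
  have hweight : exp (5 * k₁) ^ 3 * (exp (k₁ - k₃) * exp (5 * k₁)) ^ 2
      = exp (3 * k₁) ^ 7 * exp (3 * k₁ - k₃) ^ 2 := by
    simp only [← exp_nat_mul, ← exp_add]
    congr 1
    push_cast
    ring
  rw [hW, hAtr, hBtr, hCtr]
  calc _ = exp (5 * k₁) ^ 3 * (exp (k₁ - k₃) * exp (5 * k₁)) ^ 2 / deriv lam t ^ 9
          * (A t ^ 3 * (deriv A t * E t - A t * deriv E t) ^ 2)
        / (exp (3 * k₁) ^ 7 * exp (3 * k₁ - k₃) ^ 2 / deriv lam t ^ 9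
          * (B t ^ 7 * C t ^ 2)) := by ring
    _ = _ := by
      rw [hweight, mul_div_mul_left _ _ (by simp [hlam' t, exp_ne_zero])]

/-- `J₃⁽¹⁾ = A³(A_t E − A E_t)²/(B⁷C²)` is a first-order differential invariant of the
equivalence group of the undamped fifth-order KdV subclass (3). -/
theorem J3_first_order_invariant
    (k₁ k₃ : ℝ)
    (lam : ℝ → ℝ) (hlam : Differentiable ℝ lam)
    (hlam2 : Differentiable ℝ (deriv lam)) (hlam' : ∀ t, deriv lam t ≠ 0)
    (A B C E : ℝ → ℝ) (hA : Differentiable ℝ A) (hB : Differentiable ℝ B)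
    (hC : Differentiable ℝ C) (hE : Differentiable ℝ E)
    (hBne : ∀ t, B t ≠ 0) (hCne : ∀ t, C t ≠ 0)
    (At Bt Ct Et : ℝ → ℝ) (hAt : Differentiable ℝ At) (hBt : Differentiable ℝ Bt)
    (hCt : Differentiable ℝ Ct) (hEt : Differentiable ℝ Et)
    (hAtr : ∀ t, At (lam t) = Real.exp (5 * k₁) * A t / deriv lam t)
    (hBtr : ∀ t, Bt (lam t) = Real.exp (3 * k₁) * B t / deriv lam t)
    (hCtr : ∀ t, Ct (lam t) = Real.exp (3 * k₁ - k₃) * C t / deriv lam t)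
    (hEtr : ∀ t, Et (lam t) = Real.exp (k₁ - k₃) * E t / deriv lam t) :
    ∀ t,
      At (lam t) ^ 3 * (deriv At (lam t) * Et (lam t) - At (lam t) * deriv Et (lam t)) ^ 2
          / (Bt (lam t) ^ 7 * Ct (lam t) ^ 2)
        = A t ^ 3 * (deriv A t * E t - A t * deriv E t) ^ 2 / (B t ^ 7 * C t ^ 2) :=
  J3_first_order_invariant_general k₁ k₃ lam hlam hlam2 hlam' A B C E hA hE At Bt Ct Et hAt hEt hAtr
    hBtr hCtr hEtr
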